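/- arXiv:1509.03328 — 4 statements merged into one kernel-verified Lean document; each statement's English description precedes it below -/
import Mathlib

section
/- Let W₁, W₂, W₃ be convex open sets in ℝⁿ such that their triple intersection is nonempty and is equal to all pairwise intersections, i.e., W₁ ∩ W₂ ∩ W₃ ≠ ∅ and W₁ ∩ W₂ ∩ W₃ = Wᵢ ∩ Wⱼ for all 1 ≤ i < j ≤ 3. Then any affine line L in ℝⁿ that intersects each of W₁, W₂, and W₃ must intersect W₁ ∩ W₂ ∩ W₃. -/
/-!
Of three points of a line one lies between the other two, say `b ∈ W₂` between `a ∈ W₁` and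
`c ∈ W₃`; fix `q` in the triple intersection `T`. Shrinking the picture towards `q` by the
homothety of ratio `r ∈ [0, 1]` keeps the three points in their sets, and the set of ratios for
which the image of `b` lies in `T` is open and contains `0`. It is also closed: at a boundary
ratio the image `y` of `b` lies in `W₂` and in the closures of `W₁` and `W₃`, so small moves from
`y` towards the images of `a` and `c` land in `W₁ ∩ W₂ = T` and in `W₃ ∩ W₂ = T`, and `y` lies
between the two resulting points of the convex set `T`. By connectedness of `[0, 1]` the ratio
`1` is admissible, i.e. `b ∈ T`.
-/

open Set Filter Topology AffineMap

variable {E : Type*} [AddCommGroup E] [Module ℝ E] [TopologicalSpace E]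
  [IsTopologicalAddGroup E] [ContinuousSMul ℝ E]

theorem Wbtw.map_lineMap {R V P : Type*} [CommRing R] [PartialOrder R] [AddCommGroup V]
    [Module R V] [AddTorsor V P] {a b c : P} (h : Wbtw R a b c) (q : P) (r : R) :
    Wbtw R (lineMap q a r) (lineMap q b r) (lineMap q c r) := by
  simpa [homothety_eq_lineMap] using h.map (homothety q r)

theorem Convex.lineMap_mem_interior_of_mem_closure {S : Set E} (hS : Convex ℝ S) {x y : E}
    (hx : x ∈ interior S) (hy : y ∈ closure S) {μ : ℝ} (hμ : μ ∈ Ioc 0 1) :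
    lineMap y x μ ∈ interior S := by
  rw [lineMap_apply_module]
  exact hS.combo_closure_interior_mem_interior hy hx (sub_nonneg.2 hμ.2) hμ.1 (by ring)

theorem Convex.mem_of_wbtw_of_mem_closure_inter {A B C : Set E} (hA : Convex ℝ A)
    (hC : Convex ℝ C) (hAo : IsOpen A) (hBo : IsOpen B) (hCo : IsOpen C)
    (hAC : A ∩ B = C ∩ B) {a c y : E} (ha : a ∈ A) (hc : c ∈ C) (hy : Wbtw ℝ a y c)
    (hyB : y ∈ B) (hyAB : y ∈ closure (A ∩ B)) : y ∈ A := by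
  have hyA : y ∈ closure A := closure_mono inter_subset_left hyAB
  have hyC : y ∈ closure C := closure_mono inter_subset_left (hAC ▸ hyAB)
  have hnear : ∀ x : E, ∀ᶠ μ in 𝓝 (0 : ℝ), lineMap y x μ ∈ B := fun x =>
    lineMap_continuous.continuousAt.preimage_mem_nhds (by simpa using hBo.mem_nhds hyB)
  obtain ⟨μ, ⟨haB, hcB⟩, hμ⟩ := (((hnear a).and (hnear c)).filter_mono nhdsWithin_le_nhds
    |>.and (Ioc_mem_nhdsGT zero_lt_one)).exists
  have hza : lineMap y a μ ∈ A := interior_subset <|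
    hA.lineMap_mem_interior_of_mem_closure (by rwa [hAo.interior_eq]) hyA hμ
  have hzc : lineMap y c μ ∈ A := by
    have hzcC : lineMap y c μ ∈ C := interior_subset <|
      hC.lineMap_mem_interior_of_mem_closure (by rwa [hCo.interior_eq]) hyC hμ
    exact (hAC.symm ▸ ⟨hzcC, hcB⟩ : lineMap y c μ ∈ A ∩ B).1
  have hbtw : Wbtw ℝ (lineMap y a μ) y (lineMap y c μ) := by
    simpa using hy.map_lineMap y μ
  exact hA.mem_of_wbtw hbtw hza hzc

theorem Convex.mem_inter_of_wbtw {A B C : Set E} (hA : Convex ℝ A) (hB : Convex ℝ B)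
    (hC : Convex ℝ C) (hAo : IsOpen A) (hBo : IsOpen B) (hCo : IsOpen C)
    (hAC : A ∩ B = C ∩ B) {q : E} (hq : q ∈ A ∩ B) {a b c : E} (ha : a ∈ A) (hb : b ∈ B)
    (hc : c ∈ C) (h : Wbtw ℝ a b c) : b ∈ A ∩ B := by
  have hqC : q ∈ C := (hAC ▸ hq).1
  have hcont : Continuous (lineMap q b : ℝ → E) := lineMap_continuous
  suffices Icc (0 : ℝ) 1 ⊆ lineMap q b ⁻¹' (A ∩ B) by
    simpa using this (right_mem_Icc.2 zero_le_one)
  refine isPreconnected_Icc.subset_of_closure_inter_subset ((hAo.inter hBo).preimage hcont)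
    ⟨0, left_mem_Icc.2 zero_le_one, by simpa using hq⟩ ?_
  rintro r ⟨hr, hrI⟩
  have hbr : lineMap q b r ∈ B := hB.lineMap_mem hq.2 hb hrI
  refine ⟨?_, hbr⟩
  exact hA.mem_of_wbtw_of_mem_closure_inter hC hAo hBo hCo hAC (hA.lineMap_mem hq.1 ha hrI)
    (hC.lineMap_mem hqC hc hrI) (h.map_lineMap q r) hbr (hcont.closure_preimage_subset _ hr)

theorem line_meets_triple_intersection_general
    (n : ℕ) (W₁ W₂ W₃ : Set (EuclideanSpace ℝ (Fin n)))
    (hconv₁ : Convex ℝ W₁) (hconv₂ : Convex ℝ W₂) (hconv₃ : Convex ℝ W₃)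
    (hopen₁ : IsOpen W₁) (hopen₂ : IsOpen W₂) (hopen₃ : IsOpen W₃)
    (hne : (W₁ ∩ W₂ ∩ W₃).Nonempty)
    (h12 : W₁ ∩ W₂ ∩ W₃ = W₁ ∩ W₂)
    (h13 : W₁ ∩ W₂ ∩ W₃ = W₁ ∩ W₃)
    (h23 : W₁ ∩ W₂ ∩ W₃ = W₂ ∩ W₃)
    (p v : EuclideanSpace ℝ (Fin n))
    (L : Set (EuclideanSpace ℝ (Fin n)))
    (hL : L = {x | ∃ t : ℝ, x = p + t • v})
    (hL₁ : (L ∩ W₁).Nonempty) (hL₂ : (L ∩ W₂).Nonempty) (hL₃ : (L ∩ W₃).Nonempty) :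
    (L ∩ (W₁ ∩ W₂ ∩ W₃)).Nonempty := by
  obtain ⟨q, hq⟩ := hne
  obtain ⟨x₁, hx₁L, hx₁⟩ := hL₁
  obtain ⟨x₂, hx₂L, hx₂⟩ := hL₂
  obtain ⟨x₃, hx₃L, hx₃⟩ := hL₃
  have hLcol : Collinear ℝ L := (collinear_iff_exists_forall_eq_smul_vadd L).2
    ⟨p, v, fun x hx => by obtain ⟨t, rfl⟩ := hL ▸ hx; exact ⟨t, add_comm _ _⟩⟩
  have hcol : Collinear ℝ {x₁, x₂, x₃} :=
    hLcol.subset (insert_subset hx₁L (insert_subset hx₂L (singleton_subset_iff.2 hx₃L)))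
  rcases hcol.wbtw_or_wbtw_or_wbtw with h | h | h
  · refine ⟨x₂, hx₂L, ?_⟩
    rw [h12]
    exact hconv₁.mem_inter_of_wbtw hconv₂ hconv₃ hopen₁ hopen₂ hopen₃
      (by rw [← h12, h23, inter_comm]) ⟨hq.1.1, hq.1.2⟩ hx₁ hx₂ hx₃ h
  · refine ⟨x₃, hx₃L, ?_⟩
    rw [h23]
    exact hconv₂.mem_inter_of_wbtw hconv₃ hconv₁ hopen₂ hopen₃ hopen₁
      (by rw [← h23, h13]) ⟨hq.1.2, hq.2⟩ hx₂ hx₃ hx₁ h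
  · refine ⟨x₁, hx₁L, ?_⟩
    rw [h13, inter_comm]
    exact hconv₃.mem_inter_of_wbtw hconv₁ hconv₂ hopen₃ hopen₁ hopen₂
      (by rw [inter_comm, ← h13, h12, inter_comm]) ⟨hq.2, hq.1.1⟩
      hx₃ hx₁ hx₂ h

/-- **Lemma 3.2 (Lienkaemper–Shiu–Woodstock).**
Let `W₁, W₂, W₃` be convex open sets in `ℝⁿ` whose triple intersection is nonempty
and equals all pairwise intersections.  Then any line that intersects each of the
`Wᵢ`'s must intersect `W₁ ∩ W₂ ∩ W₃`. -/
theorem line_meets_triple_intersection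
    (n : ℕ) (W₁ W₂ W₃ : Set (EuclideanSpace ℝ (Fin n)))
    (hconv₁ : Convex ℝ W₁) (hconv₂ : Convex ℝ W₂) (hconv₃ : Convex ℝ W₃)
    (hopen₁ : IsOpen W₁) (hopen₂ : IsOpen W₂) (hopen₃ : IsOpen W₃)
    (hne : (W₁ ∩ W₂ ∩ W₃).Nonempty)
    (h12 : W₁ ∩ W₂ ∩ W₃ = W₁ ∩ W₂)
    (h13 : W₁ ∩ W₂ ∩ W₃ = W₁ ∩ W₃)
    (h23 : W₁ ∩ W₂ ∩ W₃ = W₂ ∩ W₃)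
    (p v : EuclideanSpace ℝ (Fin n)) (hv : v ≠ 0)
    (L : Set (EuclideanSpace ℝ (Fin n)))
    (hL : L = {x | ∃ t : ℝ, x = p + t • v})
    (hL₁ : (L ∩ W₁).Nonempty) (hL₂ : (L ∩ W₂).Nonempty) (hL₃ : (L ∩ W₃).Nonempty) :
    (L ∩ (W₁ ∩ W₂ ∩ W₃)).Nonempty :=
  line_meets_triple_intersection_general n W₁ W₂ W₃ hconv₁ hconv₂ hconv₃ hopen₁ hopen₂ hopen₃ hne
    h12 h13 h23 p v L hL hL₁ hL₂ hL₃
end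

section
/- The neural code C = {{2,3,4,5}, {1,2,3}, {1,3,4}, {1,4,5}, {2,3,4}, {3,4,5}, {1,3}, {1,4}, {2,3}, {3,4}, {4,5}, {3}, {4}, ∅} on 5 neurons (obtained by adding the codewords {2,3,4} and {3,4,5} to the code {{2,3,4,5}, {1,2,3}, {1,3,4}, {1,4,5}, {1,3}, {1,4}, {2,3}, {3,4}, {4,5}, {3}, {4}, ∅}) is convex: there exist convex open sets U₁, …, U₅ ⊆ ℝ² that realize C. -/
/-- The atom of a codeword `σ` with respect to the sets `U i`:
`(⋂ i ∈ σ, U i) \ ⋃ j ∉ σ, U j`. -/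
def codeAtom {n : ℕ} {X : Type*} (U : Fin n → Set X) (σ : Finset (Fin n)) : Set X :=
  (⋂ i ∈ σ, U i) \ ⋃ (j : Fin n) (_ : j ∉ σ), U j

/-- A collection `U` of subsets of `X` realizes the code `C` if `⋃ i, U i ⊊ X` and,
for every nonempty `σ ⊆ [n]`, `σ ∈ C` iff the atom of `σ` is nonempty. -/
def Realizes {n : ℕ} {X : Type*} (U : Fin n → Set X) (C : Set (Finset (Fin n))) : Prop :=
  (⋃ i, U i) ⊂ Set.univ ∧
  ∀ σ : Finset (Fin n), σ.Nonempty → (σ ∈ C ↔ (codeAtom U σ).Nonempty)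

/-- The code obtained by adding the codewords `234` and `345` to the counterexample
code `{2345, 123, 134, 145, 13, 14, 23, 34, 45, 3, 4, ∅}`
(with neurons `1,…,5` encoded as `0,…,4` in `Fin 5`). -/
def augmentedCode : Set (Finset (Fin 5)) :=
  {{1, 2, 3, 4}, {0, 1, 2}, {0, 2, 3}, {0, 3, 4}, {1, 2, 3}, {2, 3, 4},
   {0, 2}, {0, 3}, {1, 2}, {2, 3}, {3, 4}, {2}, {3}, ∅}
/-!
`U 2 = (0,60)×(0,100)` and `U 3 = (40,100)×(0,100)` are overlapping squares, `U 0` is a thin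
strip along their top edge crossing both, and `U 1 ⊆ U 2`, `U 4 ⊆ U 3` are rectangles reaching up
into the strip, each with a corner cut off by a half-plane so that `U 1` misses `U 0 ∩ U 3` and
`U 4` misses `U 0 ∩ U 2`. These containments and empty triple intersections constrain the codeword
of every point, and the subsets of `Fin 5` obeying them are exactly the codewords of the code;
each codeword is then witnessed by an explicit point.
-/

open Set

local notation "ℝ²" => EuclideanSpace ℝ (Fin 2)

open Classical in
noncomputable def codeword {n : ℕ} {X : Type*} (U : Fin n → Set X) (p : X) : Finset (Fin n) :=
  {i | p ∈ U i}

section Codeword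

variable {n : ℕ} {X : Type*} {U : Fin n → Set X}

@[simp]
lemma mem_codeword {p : X} {i : Fin n} : i ∈ codeword U p ↔ p ∈ U i := by
  simp [codeword]

lemma codeAtom_eq_preimage_codeword (σ : Finset (Fin n)) :
    codeAtom U σ = codeword U ⁻¹' {σ} := by
  ext p
  simp only [codeAtom, mem_sdiff, mem_iInter, mem_iUnion, not_exists, mem_preimage,
    mem_singleton_iff, Finset.ext_iff, mem_codeword]
  exact ⟨fun h i => ⟨fun hp => by_contra fun hi => h.2 i hi hp, h.1 i⟩,
    fun h => ⟨fun i => (h i).2, fun i hi hp => hi ((h i).1 hp)⟩⟩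

lemma codeAtom_nonempty_iff {σ : Finset (Fin n)} :
    (codeAtom U σ).Nonempty ↔ σ ∈ range (codeword U) := by
  simp [codeAtom_eq_preimage_codeword, Set.Nonempty, eq_comm]

lemma iUnion_ssubset_univ_iff : (⋃ i, U i) ⊂ univ ↔ ∅ ∈ range (codeword U) := by
  simp [ssubset_univ_iff, eq_univ_iff_forall, Finset.eq_empty_iff_forall_notMem]

lemma realizes_iff_range_codeword {C : Set (Finset (Fin n))} (hC : ∅ ∈ C) :
    Realizes U C ↔ range (codeword U) = C := by
  rw [Realizes, iUnion_ssubset_univ_iff]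
  simp_rw [codeAtom_nonempty_iff, Set.ext_iff]
  constructor
  · rintro ⟨h0, h⟩ σ
    rcases σ.eq_empty_or_nonempty with rfl | hσ
    · exact iff_of_true h0 hC
    · exact (h σ hσ).symm
  · intro h
    exact ⟨(h ∅).2 hC, fun σ _ => (h σ).symm⟩

end Codeword

lemma augmentedCode_eq_setOf : augmentedCode = {σ | (1 ∈ σ → 2 ∈ σ) ∧ (4 ∈ σ → 3 ∈ σ) ∧
    (0 ∈ σ → 2 ∈ σ ∨ 3 ∈ σ) ∧ ¬(0 ∈ σ ∧ 1 ∈ σ ∧ 3 ∈ σ) ∧ ¬(0 ∈ σ ∧ 2 ∈ σ ∧ 4 ∈ σ)} := by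
  ext σ
  revert σ
  simp only [augmentedCode, mem_insert_iff, mem_singleton_iff, mem_ofPred_eq]
  decide

def openBox (x₀ x₁ y₀ y₁ : ℝ) : Set ℝ² := {p | p 0 ∈ Ioo x₀ x₁ ∧ p 1 ∈ Ioo y₀ y₁}

def halfPlane (a b c : ℝ) : Set ℝ² := {p | a * p 0 + b * p 1 < c}

@[simp]
lemma mem_openBox {x₀ x₁ y₀ y₁ : ℝ} {p : ℝ²} :
    p ∈ openBox x₀ x₁ y₀ y₁ ↔ x₀ < p 0 ∧ p 0 < x₁ ∧ y₀ < p 1 ∧ p 1 < y₁ := by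
  simp [openBox, and_assoc]

@[simp]
lemma mem_halfPlane {a b c : ℝ} {p : ℝ²} : p ∈ halfPlane a b c ↔ a * p 0 + b * p 1 < c :=
  Iff.rfl

lemma convex_openBox (x₀ x₁ y₀ y₁ : ℝ) : Convex ℝ (openBox x₀ x₁ y₀ y₁) :=
  ((convex_Ioo x₀ x₁).linear_preimage (EuclideanSpace.proj 0 : ℝ² →L[ℝ] ℝ).toLinearMap).inter
    ((convex_Ioo y₀ y₁).linear_preimage (EuclideanSpace.proj 1 : ℝ² →L[ℝ] ℝ).toLinearMap)

lemma isOpen_openBox (x₀ x₁ y₀ y₁ : ℝ) : IsOpen (openBox x₀ x₁ y₀ y₁) :=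
  (isOpen_Ioo.preimage (by fun_prop)).inter (isOpen_Ioo.preimage (by fun_prop))

lemma convex_halfPlane (a b c : ℝ) : Convex ℝ (halfPlane a b c) :=
  convex_halfSpace_lt ⟨fun p q => by simp; ring, fun r p => by simp; ring⟩ c

lemma isOpen_halfPlane (a b c : ℝ) : IsOpen (halfPlane a b c) :=
  isOpen_lt (by fun_prop) continuous_const

def realization : Fin 5 → Set ℝ² :=
  ![openBox 0 100 92 98, openBox 10 50 10 100 ∩ halfPlane 1 2 220, openBox 0 60 0 100,
    openBox 40 100 0 100, openBox 45 90 10 100 ∩ halfPlane (-1) 2 114]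

lemma convex_realization (i : Fin 5) : Convex ℝ (realization i) := by
  fin_cases i <;>
    simp [realization, convex_openBox, (convex_openBox ..).inter, convex_halfPlane]

lemma isOpen_realization (i : Fin 5) : IsOpen (realization i) := by
  fin_cases i <;>
    simp [realization, isOpen_openBox, (isOpen_openBox ..).inter, isOpen_halfPlane]

lemma codeword_realization_mem (p : ℝ²) : codeword realization p ∈ augmentedCode := by
  rw [augmentedCode_eq_setOf]
  simp only [mem_ofPred_eq, mem_codeword]
  simp only [realization, Matrix.cons_val, mem_inter_iff, mem_openBox, mem_halfPlane]
  refine ⟨fun h => ?_, fun h => ?_, fun h => ?_, fun h => ?_, fun h => ?_⟩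
  · exact ⟨by linarith, by linarith, by linarith, by linarith⟩
  · exact ⟨by linarith, by linarith, by linarith, by linarith⟩
  · rcases lt_or_ge (p 0) 60 with hx | hx
    · exact .inl ⟨by linarith, hx, by linarith, by linarith⟩
    · exact .inr ⟨by linarith, by linarith, by linarith, by linarith⟩
  · linarith
  · linarith

lemma range_codeword_realization : range (codeword realization) = augmentedCode := by
  refine Subset.antisymm (range_subset_iff.2 codeword_realization_mem) ?_
  simp only [augmentedCode, insert_subset_iff, singleton_subset_iff]
  refine ⟨⟨!₂[47, 50], ?_⟩, ⟨!₂[20, 95], ?_⟩, ⟨!₂[50, 95], ?_⟩, ⟨!₂[80, 95], ?_⟩,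
    ⟨!₂[42, 50], ?_⟩, ⟨!₂[55, 50], ?_⟩, ⟨!₂[5, 95], ?_⟩, ⟨!₂[65, 95], ?_⟩, ⟨!₂[20, 50], ?_⟩,
    ⟨!₂[55, 90], ?_⟩, ⟨!₂[70, 50], ?_⟩, ⟨!₂[5, 50], ?_⟩, ⟨!₂[95, 50], ?_⟩, ⟨!₂[200, 0], ?_⟩⟩
  all_goals ext i; fin_cases i <;> norm_num [realization, Fin.ext_iff]


/-- **Proposition 3.3.** The code obtained by adding the codewords `234` and `345` to
the counterexample code is convex: it has a realization by convex open sets in `ℝ²`. -/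
theorem augmentedCode_convex :
    ∃ U : Fin 5 → Set (EuclideanSpace ℝ (Fin 2)),
      (∀ i, Convex ℝ (U i)) ∧ (∀ i, IsOpen (U i)) ∧ Realizes U augmentedCode :=
  ⟨realization, convex_realization, isOpen_realization,
    (realizes_iff_range_codeword (by simp [augmentedCode])).2 range_codeword_realization⟩
end

section
/- The three-neuron code C = {{1,2}, {1,3}, ∅} cannot be realized by connected open sets: there is no topological space X and no collection U₁, U₂, U₃ of connected open subsets of X realizing C. In particular, C is neither a convex code nor a good-cover code. -/
universe u

/-- The three-neuron code `C = {12, 13, ∅}`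
(with neurons `1,2,3` encoded as `0,1,2` in `Fin 3`). -/
def threeNeuronCode : Set (Finset (Fin 3)) := {{0, 1}, {0, 2}, ∅}

lemma core {X : Type u} [TopologicalSpace X] (U : Fin 3 → Set X)
    (hopen : ∀ i, IsOpen (U i)) (hp : IsPreconnected (U 0))
    (h : Realizes U threeNeuronCode) : False := by
  obtain ⟨-, hC⟩ := h
  have h01 : (codeAtom U {0,1}).Nonempty :=
    (hC {0,1} (by decide)).mp (Set.mem_insert _ _)
  have h02 : (codeAtom U {0,2}).Nonempty :=
    (hC {0,2} (by decide)).mp (Set.mem_insert_of_mem _ (Set.mem_insert _ _))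
  obtain ⟨x, hx⟩ := h01
  obtain ⟨y, hy⟩ := h02
  simp only [codeAtom, Set.mem_diff, Set.mem_iInter, Set.mem_iUnion, not_exists] at hx hy
  have hx0 : x ∈ U 0 := hx.1 0 (by decide)
  have hx1 : x ∈ U 1 := hx.1 1 (by decide)
  have hy0 : y ∈ U 0 := hy.1 0 (by decide)
  have hy2 : y ∈ U 2 := hy.1 2 (by decide)
  have hsub : U 0 ⊆ U 1 ∪ U 2 := by
    intro z hz
    by_contra hcon
    rw [Set.mem_union] at hcon; push_neg at hcon
    have : ({0} : Finset (Fin 3)) ∈ threeNeuronCode := by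
      refine (hC {0} (by decide)).mpr ⟨z, ?_⟩
      simp only [codeAtom, Set.mem_diff, Set.mem_iInter, Set.mem_iUnion, not_exists]
      constructor
      · intro i hi; fin_cases hi; exact hz
      · intro j hj
        fin_cases j
        · simp at hj
        · exact hcon.1
        · exact hcon.2
    simp [threeNeuronCode] at this
    revert this; decide
  have hdisj : ∀ z, z ∈ U 0 → z ∈ U 1 → z ∈ U 2 → False := by
    intro z h0 h1 h2
    have : ({0,1,2} : Finset (Fin 3)) ∈ threeNeuronCode := by
      refine (hC {0,1,2} (by decide)).mpr ⟨z, ?_⟩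
      simp only [codeAtom, Set.mem_diff, Set.mem_iInter, Set.mem_iUnion, not_exists]
      constructor
      · intro i hi; fin_cases i <;> assumption
      · intro j hj; fin_cases j <;> simp at hj
    simp [threeNeuronCode] at this
    revert this; decide
  obtain ⟨z, hz0, hz1, hz2⟩ := hp (U 1) (U 2) (hopen 1) (hopen 2) hsub
    ⟨x, hx0, hx1⟩ ⟨y, hy0, hy2⟩
  exact hdisj z hz0 hz1 hz2
lemma U0_nonempty {X : Type u} (U : Fin 3 → Set X)
    (h : Realizes U threeNeuronCode) : (U 0).Nonempty := by
  obtain ⟨x, hx⟩ := (h.2 {0,1} (by decide)).mp (Set.mem_insert _ _)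
  simp only [codeAtom, Set.mem_diff, Set.mem_iInter] at hx
  exact ⟨x, hx.1 0 (by decide)⟩

/-- **Example 2.5.** The code `C = {12, 13, ∅}` cannot be realized by connected open
sets in any topological space; in particular it is neither convex nor a good-cover
code. -/
theorem threeNeuronCode_not_realizable_by_connected_open_sets :
    (∀ (X : Type u) [TopologicalSpace X] (U : Fin 3 → Set X),
      (∀ i, IsOpen (U i)) → (∀ i, IsConnected (U i)) → ¬ Realizes U threeNeuronCode) ∧
    (¬ ∃ d : ℕ, 1 ≤ d ∧ ∃ U : Fin 3 → Set (EuclideanSpace ℝ (Fin d)),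
      (∀ i, Convex ℝ (U i)) ∧ (∀ i, IsOpen (U i)) ∧ Realizes U threeNeuronCode) ∧
    (¬ ∃ d : ℕ, 1 ≤ d ∧ ∃ U : Fin 3 → Set (EuclideanSpace ℝ (Fin d)),
      (∀ i, IsOpen (U i)) ∧ Realizes U threeNeuronCode ∧
      ∀ S : Finset (Fin 3), S.Nonempty →
        (⋂ i ∈ S, U i) = ∅ ∨ ContractibleSpace ↥(⋂ i ∈ S, U i)) := by
  refine ⟨fun X _ U ho hc h => core U ho (hc 0).isPreconnected h, ?_, ?_⟩
  · rintro ⟨d, -, U, hconv, ho, h⟩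
    exact core U ho (hconv 0).isPreconnected h
  · rintro ⟨d, -, U, ho, h, hgood⟩
    have h0 : (⋂ i ∈ ({0} : Finset (Fin 3)), U i) = U 0 := by simp
    rcases hgood {0} ⟨0, by decide⟩ with he | hcontr
    · rw [h0] at he
      exact absurd (U0_nonempty U h) (by simp [he])
    · rw [h0] at hcontr
      have : PreconnectedSpace ↥(U 0) := by infer_instance
      exact core U ho (isPreconnected_iff_preconnectedSpace.mpr this) h
end

section
/- Let n ≥ 1 and m ≥ 2, and let σ, N₁, …, N_m be subsets of [n] = {1,…,n} such that: σ ∪ N₁ ∪ ⋯ ∪ N_m = [n]; σ is disjoint from each Nᵢ; each Nᵢ is nonempty; no Nᵢ is contained in Nⱼ for i ≠ j; τᵢ := Nᵢ ∩ N_{i+1} is nonempty for 1 ≤ i ≤ m−1; and Nᵢ ∩ Nⱼ = ∅ whenever |i − j| ≥ 2. Then the neural code C = {σ ∪ Nᵢ : 1 ≤ i ≤ m} ∪ {σ ∪ τᵢ : 1 ≤ i ≤ m−1} ∪ {∅} is convex with a realization in ℝ¹: there exist convex open sets (open intervals) U₁, …, Uₙ ⊆ ℝ realizing C. -/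
open Set

open Classical in
/-- The interval assigned to neuron `j` in the realization of the minimal code
of a coned path. -/
noncomputable def UU {n : ℕ} (σ : Finset (Fin n)) (N : ℕ → Finset (Fin n)) (m : ℕ)
    (j : Fin n) : Set ℝ :=
  if j ∈ σ then Set.Ioo 0 (2 * m - 1)
  else if h : ∃ k, k + 1 < m ∧ j ∈ N k ∩ N (k + 1) then
    Set.Ioo (2 * (h.choose : ℝ)) (2 * (h.choose : ℝ) + 3)
  else if h2 : ∃ k, k < m ∧ j ∈ N k then
    Set.Ioo (2 * (h2.choose : ℝ)) (2 * (h2.choose : ℝ) + 1)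
  else ∅

section ConedPathLemmas

variable {n m : ℕ} {σ : Finset (Fin n)} {N : ℕ → Finset (Fin n)}

lemma tau_unique (hfar : ∀ i < m, ∀ j < m, i + 2 ≤ j ∨ j + 2 ≤ i → N i ∩ N j = ∅)
    {j : Fin n} {k k' : ℕ} (hk : k + 1 < m) (hk' : k' + 1 < m)
    (hj : j ∈ N k ∩ N (k + 1)) (hj' : j ∈ N k' ∩ N (k' + 1)) : k = k' := by
  by_contra hne
  rcases Nat.lt_or_ge k k' with h | h
  · have hemp := hfar k (by omega) (k' + 1) hk' (Or.inl (by omega))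
    have : j ∈ N k ∩ N (k' + 1) :=
      Finset.mem_inter.mpr ⟨(Finset.mem_inter.mp hj).1, (Finset.mem_inter.mp hj').2⟩
    rw [hemp] at this; exact absurd this (Finset.notMem_empty j)
  · have hlt : k' < k := by omega
    have hemp := hfar k' (by omega) (k + 1) hk (Or.inl (by omega))
    have : j ∈ N k' ∩ N (k + 1) :=
      Finset.mem_inter.mpr ⟨(Finset.mem_inter.mp hj').1, (Finset.mem_inter.mp hj).2⟩
    rw [hemp] at this; exact absurd this (Finset.notMem_empty j)

lemma plain_unique (hfar : ∀ i < m, ∀ j < m, i + 2 ≤ j ∨ j + 2 ≤ i → N i ∩ N j = ∅)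
    {j : Fin n} (hτ : ¬∃ k, k + 1 < m ∧ j ∈ N k ∩ N (k + 1))
    {k k' : ℕ} (hk : k < m) (hk' : k' < m)
    (hj : j ∈ N k) (hj' : j ∈ N k') : k = k' := by
  by_contra hne
  wlog h : k < k' generalizing k k'
  · exact this hk' hk hj' hj (Ne.symm hne) (by omega)
  rcases Nat.lt_or_ge (k + 1) k' with h2 | h2
  · have hemp := hfar k hk k' hk' (Or.inl (by omega))
    have : j ∈ N k ∩ N k' := Finset.mem_inter.mpr ⟨hj, hj'⟩
    rw [hemp] at this; exact absurd this (Finset.notMem_empty j)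
  · have : k' = k + 1 := by omega
    subst this
    exact hτ ⟨k, hk', Finset.mem_inter.mpr ⟨hj, hj'⟩⟩

lemma mem_UU_iff (hfar : ∀ i < m, ∀ j < m, i + 2 ≤ j ∨ j + 2 ≤ i → N i ∩ N j = ∅)
    (j : Fin n) (x : ℝ) :
    x ∈ UU σ N m j ↔
      (j ∈ σ ∧ 0 < x ∧ x < 2 * m - 1) ∨
      (j ∉ σ ∧ ∃ k, k + 1 < m ∧ j ∈ N k ∩ N (k + 1) ∧
        2 * (k : ℝ) < x ∧ x < 2 * k + 3) ∨
      (j ∉ σ ∧ (¬∃ k, k + 1 < m ∧ j ∈ N k ∩ N (k + 1)) ∧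
        ∃ k, k < m ∧ j ∈ N k ∧ 2 * (k : ℝ) < x ∧ x < 2 * k + 1) := by
  unfold UU
  split_ifs with h1 h2 h3
  · constructor
    · rintro ⟨ha, hb⟩
      exact Or.inl ⟨h1, ha, hb⟩
    · rintro (⟨_, ha, hb⟩ | ⟨hns, _⟩ | ⟨hns, _⟩)
      · exact ⟨ha, hb⟩
      · exact absurd h1 hns
      · exact absurd h1 hns
  · obtain ⟨hc1, hc2⟩ := h2.choose_spec
    constructor
    · rintro ⟨ha, hb⟩
      exact Or.inr (Or.inl ⟨h1, h2.choose, hc1, hc2, ha, hb⟩)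
    · rintro (⟨hjσ, _⟩ | ⟨_, k, hk, hjk, hb1, hb2⟩ | ⟨_, hτ, _⟩)
      · exact absurd hjσ h1
      · have hkc : k = h2.choose := tau_unique hfar hk hc1 hjk hc2
        subst hkc; exact ⟨hb1, hb2⟩
      · exact absurd h2 hτ
  · obtain ⟨hc1, hc2⟩ := h3.choose_spec
    constructor
    · rintro ⟨ha, hb⟩
      exact Or.inr (Or.inr ⟨h1, h2, h3.choose, hc1, hc2, ha, hb⟩)
    · rintro (⟨hjσ, _⟩ | ⟨_, k, hk, hjk, _⟩ | ⟨_, _, k, hk, hjk, hb1, hb2⟩)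
      · exact absurd hjσ h1
      · exact absurd ⟨k, hk, hjk⟩ h2
      · have hkc : k = h3.choose := plain_unique hfar h2 hk hc1 hjk hc2
        subst hkc; exact ⟨hb1, hb2⟩
  · constructor
    · rintro ⟨⟩
    · rintro (⟨hjσ, _⟩ | ⟨_, k, hk, hjk, _⟩ | ⟨_, _, k, hk, hjk, _⟩)
      · exact absurd hjσ h1
      · exact absurd ⟨k, hk, hjk⟩ h2
      · exact absurd ⟨k, hk, hjk⟩ h3

lemma UU_subset (j : Fin n) : UU σ N m j ⊆ Set.Ioo 0 (2 * m - 1) := by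
  unfold UU
  split_ifs with h1 h2 h3
  · exact subset_rfl
  · obtain ⟨hc1, _⟩ := h2.choose_spec
    apply Set.Ioo_subset_Ioo
    · positivity
    · have : (h2.choose : ℝ) + 2 ≤ m := by exact_mod_cast by omega
      linarith
  · obtain ⟨hc1, _⟩ := h3.choose_spec
    apply Set.Ioo_subset_Ioo
    · positivity
    · have : (h3.choose : ℝ) + 1 ≤ m := by exact_mod_cast hc1
      linarith
  · exact Set.empty_subset _

/-- Membership characterization on the open cell `(2i, 2i+1)`: the membership
set there is exactly `σ ∪ N i`. -/
lemma memA (hfar : ∀ i < m, ∀ j < m, i + 2 ≤ j ∨ j + 2 ≤ i → N i ∩ N j = ∅)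
    {i : ℕ} (hi : i < m) {x : ℝ} (hx1 : 2 * (i : ℝ) < x) (hx2 : x < 2 * i + 1)
    (j : Fin n) : x ∈ UU σ N m j ↔ j ∈ σ ∪ N i := by
  rw [mem_UU_iff hfar, Finset.mem_union]
  constructor
  · rintro (⟨hjσ, _⟩ | ⟨_, k, hk, hjk, hb1, hb2⟩ | ⟨_, _, k, hk, hjk, hb1, hb2⟩)
    · exact Or.inl hjσ
    · have hki : (k : ℝ) < i + 1 := by linarith
      have hik : (i : ℝ) < k + 2 := by linarith
      have hki' : k < i + 1 := by exact_mod_cast hki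
      have hik' : i < k + 2 := by exact_mod_cast hik
      have : i = k ∨ i = k + 1 := by omega
      rcases this with rfl | rfl
      · exact Or.inr (Finset.mem_inter.mp hjk).1
      · exact Or.inr (Finset.mem_inter.mp hjk).2
    · have hki : (k : ℝ) < i + 1 := by linarith
      have hik : (i : ℝ) < k + 1 := by linarith
      have hki' : k < i + 1 := by exact_mod_cast hki
      have hik' : i < k + 1 := by exact_mod_cast hik
      have : i = k := by omega
      subst this; exact Or.inr hjk
  · intro hj
    by_cases hσj : j ∈ σ
    · refine Or.inl ⟨hσj, ?_, ?_⟩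
      · have : (0 : ℝ) ≤ 2 * i := by positivity
        linarith
      · have : (i : ℝ) + 1 ≤ m := by exact_mod_cast hi
        linarith
    · have hjN : j ∈ N i := hj.resolve_left hσj
      by_cases hτ : ∃ k, k + 1 < m ∧ j ∈ N k ∩ N (k + 1)
      · obtain ⟨k, hk, hjk⟩ := hτ
        have hkm : k < m := by omega
        have h1' : ¬(i + 2 ≤ k + 1) := by
          intro h
          have hemp := hfar i hi (k + 1) hk (Or.inl h)
          have hmem : j ∈ N i ∩ N (k + 1) :=
            Finset.mem_inter.mpr ⟨hjN, (Finset.mem_inter.mp hjk).2⟩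
          rw [hemp] at hmem; exact absurd hmem (Finset.notMem_empty j)
        have h2' : ¬(k + 2 ≤ i) := by
          intro h
          have hemp := hfar i hi k hkm (Or.inr h)
          have hmem : j ∈ N i ∩ N k :=
            Finset.mem_inter.mpr ⟨hjN, (Finset.mem_inter.mp hjk).1⟩
          rw [hemp] at hmem; exact absurd hmem (Finset.notMem_empty j)
        have hikk : i = k ∨ i = k + 1 := by omega
        refine Or.inr (Or.inl ⟨hσj, k, hk, hjk, ?_, ?_⟩)
        · rcases hikk with rfl | rfl
          · exact hx1
          · push_cast at hx1 ⊢
            linarith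
        · rcases hikk with rfl | rfl
          · linarith
          · push_cast at hx2 ⊢
            linarith
      · exact Or.inr (Or.inr ⟨hσj, hτ, i, hi, hjN, hx1, hx2⟩)

/-- Membership characterization on the closed cell `[2i+1, 2i+2]`: the membership
set there is exactly `σ ∪ (N i ∩ N (i+1))`. -/
lemma memB (hfar : ∀ i < m, ∀ j < m, i + 2 ≤ j ∨ j + 2 ≤ i → N i ∩ N j = ∅)
    {i : ℕ} (hi : i + 1 < m) {x : ℝ} (hx1 : 2 * (i : ℝ) + 1 ≤ x) (hx2 : x ≤ 2 * i + 2)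
    (j : Fin n) : x ∈ UU σ N m j ↔ j ∈ σ ∪ (N i ∩ N (i + 1)) := by
  rw [mem_UU_iff hfar, Finset.mem_union]
  constructor
  · rintro (⟨hjσ, _⟩ | ⟨_, k, hk, hjk, hb1, hb2⟩ | ⟨_, _, k, hk, hjk, hb1, hb2⟩)
    · exact Or.inl hjσ
    · have hki : (k : ℝ) < i + 1 := by linarith
      have hik : (i : ℝ) < k + 1 := by linarith
      have hki' : k < i + 1 := by exact_mod_cast hki
      have hik' : i < k + 1 := by exact_mod_cast hik
      have : i = k := by omega
      subst this; exact Or.inr hjk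
    · have hki : (k : ℝ) < i + 1 := by linarith
      have hik : (i : ℝ) < k := by linarith
      have hki' : k < i + 1 := by exact_mod_cast hki
      have hik' : i < k := by exact_mod_cast hik
      omega
  · intro hj
    by_cases hσj : j ∈ σ
    · refine Or.inl ⟨hσj, ?_, ?_⟩
      · have : (0 : ℝ) ≤ 2 * i := by positivity
        linarith
      · have : (i : ℝ) + 2 ≤ m := by exact_mod_cast by omega
        linarith
    · have hjN : j ∈ N i ∩ N (i + 1) := hj.resolve_left hσj
      exact Or.inr (Or.inl ⟨hσj, i, hi, hjN, by linarith, by linarith⟩)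

/-- Every point of `(0, 2m-1)` lies in an open cell `(2i, 2i+1)` or a closed cell
`[2i+1, 2i+2]`. -/
lemma cell_coverage {m : ℕ} {x : ℝ} (hx0 : 0 < x) (hx1 : x < 2 * m - 1) :
    (∃ i < m, 2 * (i : ℝ) < x ∧ x < 2 * i + 1) ∨
    (∃ i, i + 1 < m ∧ 2 * (i : ℝ) + 1 ≤ x ∧ x ≤ 2 * i + 2) := by
  have hfl : (0 : ℤ) ≤ ⌊x⌋ := Int.floor_nonneg.mpr hx0.le
  set t : ℕ := ⌊x⌋.toNat with ht
  have htx : (t : ℝ) ≤ x := by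
    have := Int.floor_le x
    rwa [show ((t : ℕ) : ℝ) = (⌊x⌋ : ℝ) by exact_mod_cast congrArg Int.cast (Int.toNat_of_nonneg hfl)]
  have htx2 : x < t + 1 := by
    have := Int.lt_floor_add_one x
    rwa [show ((t : ℕ) : ℝ) = (⌊x⌋ : ℝ) by exact_mod_cast congrArg Int.cast (Int.toNat_of_nonneg hfl)]
  have htm : t + 1 < 2 * m := by
    have h1 : (t : ℝ) < 2 * m - 1 := lt_of_le_of_lt htx hx1
    have : (t : ℝ) + 1 < 2 * m := by linarith
    exact_mod_cast this
  rcases Nat.even_or_odd t with ⟨i, hie⟩ | ⟨i, hio⟩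
  · -- t = 2 i
    have hteq : t = 2 * i := by omega
    by_cases hxt : (t : ℝ) < x
    · left
      refine ⟨i, by omega, ?_, ?_⟩
      · calc 2 * (i : ℝ) = t := by rw [hteq]; push_cast; ring
          _ < x := hxt
      · calc x < t + 1 := htx2
          _ = 2 * (i : ℝ) + 1 := by rw [hteq]; push_cast; ring
    · have hxe : x = t := le_antisymm (not_lt.mp hxt) htx
      have hi1 : 1 ≤ i := by
        rcases Nat.eq_zero_or_pos i with rfl | h
        · exfalso
          rw [hxe] at hx0
          simp [hteq] at hx0
        · exact h
      obtain ⟨i', rfl⟩ : ∃ i', i = i' + 1 := ⟨i - 1, by omega⟩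
      right
      refine ⟨i', by omega, ?_, ?_⟩
      · rw [hxe, hteq]; push_cast; linarith
      · rw [hxe, hteq]; push_cast; linarith
  · -- t = 2 i + 1
    right
    refine ⟨i, by omega, ?_, ?_⟩
    · calc 2 * (i : ℝ) + 1 = t := by rw [hio]; push_cast; ring
        _ ≤ x := htx
    · have : x < 2 * (i : ℝ) + 2 := by
        calc x < t + 1 := htx2
          _ = 2 * (i : ℝ) + 2 := by rw [hio]; push_cast; ring
      linarith

end ConedPathLemmas

/-- **Proposition 5.10.** The minimal code of a coned path is convex with a
realization in `ℝ¹`.  Here `σ` is the common part of all facets, the `N i`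
(for `i < m`) are the facets of the link, consecutive ones meet in the nonempty sets
`τ i = N i ∩ N (i+1)`, and non-consecutive ones are disjoint.  The minimal code
`{σ ∪ N i} ∪ {σ ∪ τ i} ∪ {∅}` is realized by convex open sets (intervals) in `ℝ`. -/
theorem conedPath_minimal_code_convex
    (n m : ℕ) (hn : 1 ≤ n) (hm : 2 ≤ m)
    (σ : Finset (Fin n)) (N : ℕ → Finset (Fin n))
    (hcover : σ ∪ (Finset.range m).biUnion N = Finset.univ)
    (hdisj : ∀ i < m, Disjoint σ (N i))
    (hNne : ∀ i < m, (N i).Nonempty)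
    (hnosub : ∀ i < m, ∀ j < m, i ≠ j → ¬ N i ⊆ N j)
    (hτne : ∀ i, i + 1 < m → (N i ∩ N (i + 1)).Nonempty)
    (hfar : ∀ i < m, ∀ j < m, i + 2 ≤ j ∨ j + 2 ≤ i → N i ∩ N j = ∅) :
    ∃ U : Fin n → Set ℝ,
      (∀ j, Convex ℝ (U j)) ∧ (∀ j, IsOpen (U j)) ∧
      Realizes U {c : Finset (Fin n) |
        (∃ i < m, c = σ ∪ N i) ∨
        (∃ i, i + 1 < m ∧ c = σ ∪ (N i ∩ N (i + 1))) ∨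
        c = ∅} := by
  refine ⟨UU σ N m, ?_, ?_, ?_, ?_⟩
  · intro j
    unfold UU
    split_ifs <;> first | exact convex_Ioo _ _ | exact convex_empty
  · intro j
    unfold UU
    split_ifs <;> first | exact isOpen_Ioo | exact isOpen_empty
  · -- strict subset of univ
    rw [Set.ssubset_univ_iff]
    intro hU
    have h0 : (0 : ℝ) ∈ ⋃ i, UU σ N m i := hU ▸ Set.mem_univ _
    obtain ⟨_, ⟨j, rfl⟩, hj⟩ := h0
    have := UU_subset (σ := σ) (N := N) (m := m) j hj
    exact lt_irrefl (0 : ℝ) this.1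
  · -- main iff
    intro c hc
    constructor
    · rintro (⟨i, hi, rfl⟩ | ⟨i, hi, rfl⟩ | rfl)
      · -- c = σ ∪ N i : witness 2i + 1/2
        refine ⟨2 * (i : ℝ) + 1 / 2, ?_, ?_⟩
        · refine Set.mem_iInter₂.mpr fun j hj => ?_
          exact (memA hfar hi (by linarith) (by linarith) j).mpr hj
        · intro hmem
          obtain ⟨_, ⟨j, rfl⟩, hj⟩ := hmem
          obtain ⟨_, ⟨hjc, rfl⟩, hj2⟩ := hj
          exact hjc ((memA hfar hi (by linarith) (by linarith) j).mp hj2)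
      · -- c = σ ∪ τ i : witness 2i + 3/2
        refine ⟨2 * (i : ℝ) + 3 / 2, ?_, ?_⟩
        · refine Set.mem_iInter₂.mpr fun j hj => ?_
          exact (memB hfar hi (by linarith) (by linarith) j).mpr hj
        · intro hmem
          obtain ⟨_, ⟨j, rfl⟩, hj⟩ := hmem
          obtain ⟨_, ⟨hjc, rfl⟩, hj2⟩ := hj
          exact hjc ((memB hfar hi (by linarith) (by linarith) j).mp hj2)
      · exact absurd rfl (Finset.nonempty_iff_ne_empty.mp hc)
    · rintro ⟨x, hxI, hxU⟩
      -- x lies in some U j with j ∈ c, hence in (0, 2m-1)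
      obtain ⟨j0, hj0⟩ := hc
      have hxj0 : x ∈ UU σ N m j0 := Set.mem_iInter₂.mp hxI j0 hj0
      have hxIoo := UU_subset (σ := σ) (N := N) (m := m) j0 hxj0
      have hmemx : ∀ j : Fin n, x ∈ UU σ N m j ↔ j ∈ c := by
        intro j
        constructor
        · intro hxj
          by_contra hjc
          exact hxU (Set.mem_iUnion₂.mpr ⟨j, hjc, hxj⟩)
        · intro hjc
          exact Set.mem_iInter₂.mp hxI j hjc
      rcases cell_coverage hxIoo.1 hxIoo.2 with ⟨i, hi, hb1, hb2⟩ | ⟨i, hi, hb1, hb2⟩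
      · refine Or.inl ⟨i, hi, ?_⟩
        ext j
        rw [← hmemx j, memA hfar hi hb1 hb2 j]
      · refine Or.inr (Or.inl ⟨i, hi, ?_⟩)
        ext j
        rw [← hmemx j, memB hfar hi hb1 hb2 j]
end
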